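/- The nuclear norm is the tightest convex envelope of the rank on the spectral-norm unit ball: (a) for every A : Matrix (Fin m) (Fin n) ℝ with spectral norm ‖A‖₂ ≤ 1, one has ‖A‖_* ≤ rank(A) (rank regarded as a real number); and (b) if g is any real-valued function on m × n real matrices that is convex on the ball B = {A : ‖A‖₂ ≤ 1} and satisfies g(A) ≤ rank(A) for all A ∈ B, then g(A) ≤ ‖A‖_* for all A ∈ B. -/

import Mathlib

/-- The spectral norm (largest singular value) of a real matrix: the `L2` operator norm
of the associated Euclidean linear map. -/
noncomputable def matSpectralNorm {m n : ℕ} (A : Matrix (Fin m) (Fin n) ℝ) : ℝ :=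
  ‖LinearMap.toContinuousLinearMap (Matrix.toEuclideanLin A)‖

/-- The nuclear norm (sum of singular values) of a real matrix: the trace of the
positive-semidefinite square root of `Aᴴ * A` (over `ℝ`, `Aᴴ = Aᵀ`). -/
noncomputable def nuclearNorm {m n : ℕ} (A : Matrix (Fin m) (Fin n) ℝ) : ℝ :=
  ((Matrix.posSemidef_conjTranspose_mul_self A).1.eigenvectorUnitary.1 *
    Matrix.diagonal ((RCLike.ofReal : ℝ → ℝ) ∘ (√·) ∘ (Matrix.posSemidef_conjTranspose_mul_self A).1.eigenvalues) *
    (star (Matrix.posSemidef_conjTranspose_mul_self A).1.eigenvectorUnitary :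
      Matrix (Fin n) (Fin n) ℝ)).trace

/-!
Let `v` be an orthonormal eigenbasis of `Aᵀ * A`. The vectors `A vᵢ` are pairwise orthogonal and
their norms `σᵢ` are the singular values, so `A = ∑ σᵢ • uᵢ vᵢᵀ` with `uᵢ = σᵢ⁻¹ • A vᵢ`, and
`‖A‖_* = ∑ σᵢ`, `rank A = #{i | σᵢ ≠ 0}`. On the spectral ball every `σᵢ ≤ 1`, whence (a).

For (b), the linear map `Φ s = ∑ sᵢ • uᵢ vᵢᵀ` sends the cube `[0,1]ⁿ` into the spectral ball
and a vertex `1_S` of the cube to a matrix of rank at most `|S| = ∑ (1_S)ᵢ`. So `g ∘ Φ - ∑`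
is convex on the cube and nonpositive at its vertices, hence on the whole cube, their convex hull;
at `s = σ` this says `g A ≤ ∑ σᵢ = ‖A‖_*`.
-/

open Finset Module InnerProductSpace Matrix
open scoped RealInnerProductSpace

theorem convexHull_pi_zero_one {ι : Type*} [Finite ι] :
    convexHull ℝ (Set.univ.pi fun _ : ι => ({0, 1} : Set ℝ)) = Set.Icc 0 1 := by
  rw [convexHull_pi, convexHull_pair, segment_eq_Icc zero_le_one, Set.pi_univ_Icc]
  rfl

theorem ConvexOn.le_of_le_on_vertices {ι : Type*} [Finite ι] {f h : (ι → ℝ) → ℝ}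
    (hf : ConvexOn ℝ (Set.Icc 0 1) f) (hh : ConcaveOn ℝ (Set.Icc 0 1) h)
    (hvert : ∀ x ∈ Set.univ.pi fun _ => ({0, 1} : Set ℝ), f x ≤ h x) {x : ι → ℝ}
    (hx : x ∈ Set.Icc 0 1) : f x ≤ h x := by
  rw [← convexHull_pi_zero_one] at hf hh hx
  obtain ⟨y, hy, hxy⟩ := (hf.sub hh).exists_ge_of_mem_convexHull (subset_convexHull ℝ _) hx
  linarith [hvert y hy, show f x - h x ≤ f y - h y from hxy]

theorem sum_le_card_filter_ne_zero {ι : Type*} (s : Finset ι) {f : ι → ℝ}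
    (hf : ∀ i ∈ s, f i ≤ 1) : ∑ i ∈ s, f i ≤ #{i ∈ s | f i ≠ 0} := by
  rw [← Finset.sum_filter_ne_zero]
  simpa using Finset.sum_le_card_nsmul _ f 1 fun i hi => hf i (Finset.mem_filter.1 hi).1

section RankOne

variable {ι E F : Type*} [NormedAddCommGroup E] [InnerProductSpace ℝ E]
  [NormedAddCommGroup F] [InnerProductSpace ℝ F]

theorem pairwise_inner_smul_eq_zero {w : ι → F} (hw : Pairwise fun i j => ⟪w i, w j⟫ = 0)
    (c : ι → ℝ) : Pairwise fun i j => ⟪c i • w i, c j • w j⟫ = 0 := fun i j hij => by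
  simp only [real_inner_smul_left, real_inner_smul_right, hw hij, mul_zero]

theorem norm_sum_sq_of_pairwise_inner_eq_zero {w : ι → F}
    (hw : Pairwise fun i j => ⟪w i, w j⟫ = 0) (s : Finset ι) :
    ‖∑ i ∈ s, w i‖ ^ 2 = ∑ i ∈ s, ‖w i‖ ^ 2 := by
  rw [← real_inner_self_eq_norm_sq, sum_inner]
  refine Finset.sum_congr rfl fun i hi => ?_
  rw [inner_sum, Finset.sum_eq_single_of_mem i hi fun j _ hji => hw hji.symm,
    real_inner_self_eq_norm_sq]

variable [Fintype ι]

theorem norm_sum_rankOne_le {w : ι → F} {v : ι → E} (hw : Pairwise fun i j => ⟪w i, w j⟫ = 0)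
    (hv : Orthonormal ℝ v) {C : ℝ} (hC : 0 ≤ C) (hwC : ∀ i, ‖w i‖ ≤ C) :
    ‖∑ i, rankOne ℝ (w i) (v i)‖ ≤ C := by
  refine ContinuousLinearMap.opNorm_le_bound _ hC fun x => ?_
  refine (pow_le_pow_iff_left₀ (norm_nonneg _) (by positivity) two_ne_zero).1 ?_
  calc ‖(∑ i, rankOne ℝ (w i) (v i)) x‖ ^ 2 = ∑ i, ‖⟪v i, x⟫‖ ^ 2 * ‖w i‖ ^ 2 := by
        simp only [FunLike.coe_sum, Finset.sum_apply, rankOne_apply, norm_smul, mul_pow,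
          norm_sum_sq_of_pairwise_inner_eq_zero (pairwise_inner_smul_eq_zero hw _)]
    _ ≤ ∑ i, ‖⟪v i, x⟫‖ ^ 2 * C ^ 2 := by
        gcongr with i
        exact hwC i
    _ ≤ (C * ‖x‖) ^ 2 := by
        rw [← Finset.sum_mul, mul_pow, mul_comm]
        gcongr
        exact hv.sum_inner_products_le x

open Classical in
theorem finrank_range_sum_rankOne_le [FiniteDimensional ℝ F] (w : ι → F) (v : ι → E) :
    finrank ℝ (LinearMap.range (∑ i, rankOne ℝ (w i) (v i) : E →ₗ[ℝ] F)) ≤ #{i | w i ≠ 0} := by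
  set S : Finset F := ({i | w i ≠ 0} : Finset ι).image w
  have hrange : LinearMap.range (∑ i, rankOne ℝ (w i) (v i) : E →ₗ[ℝ] F) ≤
      Submodule.span ℝ S := by
    rintro _ ⟨x, rfl⟩
    simp only [LinearMap.coe_sum, ContinuousLinearMap.coe_coe, Finset.sum_apply, rankOne_apply]
    refine Submodule.sum_mem _ fun i _ => ?_
    by_cases hwi : w i = 0
    · simp [hwi]
    · exact Submodule.smul_mem _ _ (Submodule.subset_span (by simpa [S] using ⟨i, hwi, rfl⟩))
  calc finrank ℝ (LinearMap.range (∑ i, rankOne ℝ (w i) (v i) : E →ₗ[ℝ] F))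
      ≤ finrank ℝ (Submodule.span ℝ (S : Set F)) := Submodule.finrank_mono hrange
    _ ≤ #S := finrank_span_finset_le_card S
    _ ≤ _ := Finset.card_image_le

variable [FiniteDimensional ℝ F] {G : (E →L[ℝ] F) → ℝ}

theorem ConvexOn.apply_sum_smul_rankOne_le_sum (hG : ConvexOn ℝ (Metric.closedBall 0 1) G)
    (hG_rank : ∀ T : E →L[ℝ] F, ‖T‖ ≤ 1 → G T ≤ finrank ℝ (LinearMap.range (T : E →ₗ[ℝ] F)))
    {u : ι → F} {v : ι → E} (hu : Pairwise fun i j => ⟪u i, u j⟫ = 0) (hu_le : ∀ i, ‖u i‖ ≤ 1)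
    (hv : Orthonormal ℝ v) {σ : ι → ℝ} (hσ : σ ∈ Set.Icc 0 1) :
    G (∑ i, σ i • rankOne ℝ (u i) (v i)) ≤ ∑ i, σ i := by
  classical
  set Φ : (ι → ℝ) →ₗ[ℝ] E →L[ℝ] F := Fintype.linearCombination ℝ fun i => rankOne ℝ (u i) (v i)
  have hΦ (s : ι → ℝ) : Φ s = ∑ i, rankOne ℝ (s i • u i) (v i) := by
    simp [Φ, Fintype.linearCombination_apply]
  have hΦ_le (s : ι → ℝ) (hs : s ∈ Set.Icc 0 1) : ‖Φ s‖ ≤ 1 := by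
    rw [hΦ]
    refine norm_sum_rankOne_le (pairwise_inner_smul_eq_zero hu s) hv zero_le_one fun i => ?_
    rw [norm_smul]
    exact mul_le_one₀ (by simpa [abs_of_nonneg (hs.1 i)] using hs.2 i) (norm_nonneg _) (hu_le i)
  have hvert (s : ι → ℝ) (hs : s ∈ Set.univ.pi fun _ => ({0, 1} : Set ℝ)) :
      G (Φ s) ≤ ∑ i, s i := by
    have hs_Icc : s ∈ Set.Icc 0 1 := by
      rw [← convexHull_pi_zero_one]
      exact subset_convexHull ℝ _ hs
    calc G (Φ s) ≤ finrank ℝ (LinearMap.range (Φ s : E →ₗ[ℝ] F)) := hG_rank _ (hΦ_le s hs_Icc)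
      _ ≤ #{i | s i • u i ≠ 0} := by
          rw [hΦ, ContinuousLinearMap.toLinearMap_sum]
          exact_mod_cast finrank_range_sum_rankOne_le (fun i => s i • u i) v
      _ ≤ #{i | s i ≠ 0} := by
          gcongr with i
          exact fun h => by simp [h]
      _ = ∑ i, s i := by
          rw [Finset.natCast_card_filter]
          refine Finset.sum_congr rfl fun i _ => ?_
          obtain h | h : s i = 0 ∨ s i = 1 := hs i (Set.mem_univ i) <;> simp [h]
  have hsum : ConcaveOn ℝ (Set.Icc 0 1) fun s : ι → ℝ => ∑ i, s i :=
    ((∑ i, LinearMap.proj (R := ℝ) (φ := fun _ : ι => ℝ) i).concaveOn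
      (convex_Icc 0 1)).congr fun s _ => by simp
  have hGΦ : ConvexOn ℝ (Set.Icc 0 1) (G ∘ Φ) :=
    (hG.comp_linearMap Φ).subset (fun s hs => by simpa using hΦ_le s hs) (convex_Icc 0 1)
  exact hGΦ.le_of_le_on_vertices hsum hvert hσ

theorem ConvexOn.le_sum_norm_apply_of_le_finrank_range
    (hG : ConvexOn ℝ (Metric.closedBall 0 1) G)
    (hG_rank : ∀ T : E →L[ℝ] F, ‖T‖ ≤ 1 → G T ≤ finrank ℝ (LinearMap.range (T : E →ₗ[ℝ] F)))
    (v : OrthonormalBasis ι ℝ E) {L : E →L[ℝ] F} (hL : ‖L‖ ≤ 1)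
    (hLv : Pairwise fun i j => ⟪L (v i), L (v j)⟫ = 0) : G L ≤ ∑ i, ‖L (v i)‖ := by
  set σ : ι → ℝ := fun i => ‖L (v i)‖
  have hσ : σ ∈ Set.Icc 0 1 := ⟨fun i => norm_nonneg _, fun i =>
    (L.unit_le_opNorm _ (v.orthonormal.1 i).le).trans hL⟩
  -- `σ i = 0` forces `L (v i) = 0`, so the junk value `0⁻¹ = 0` is harmless here.
  set u : ι → F := fun i => (σ i)⁻¹ • L (v i)
  have hu_le (i : ι) : ‖u i‖ ≤ 1 := by
    simp only [u, norm_smul, norm_inv, norm_norm, σ]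
    exact inv_mul_le_one_of_le₀ le_rfl (norm_nonneg _)
  have hσu (i : ι) : σ i • u i = L (v i) := by
    by_cases h : σ i = 0
    · simp only [σ, norm_eq_zero] at h
      simp [u, h]
    · exact smul_inv_smul₀ h _
  have hL_eq : ∑ i, σ i • rankOne ℝ (u i) (v i) = L := by
    ext x
    simp only [FunLike.coe_sum, Finset.sum_apply, _root_.smul_apply, rankOne_apply]
    simp only [smul_comm (σ _), hσu, ← map_smul, ← map_sum, v.sum_repr']
  calc G L = G (∑ i, σ i • rankOne ℝ (u i) (v i)) := by rw [hL_eq]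
    _ ≤ ∑ i, σ i := hG.apply_sum_smul_rankOne_le_sum hG_rank (pairwise_inner_smul_eq_zero hLv _)
        hu_le v.orthonormal hσ

end RankOne

theorem Matrix.rank_eq_finrank_range_toEuclideanLin {𝕜 m n : Type*} [RCLike 𝕜] [Fintype m]
    [Fintype n] [DecidableEq n] (A : Matrix m n 𝕜) :
    A.rank = finrank 𝕜 (LinearMap.range (toEuclideanLin A)) := by
  rw [toEuclideanLin_eq_toLin_orthonormal, rank_eq_finrank_range_toLin A
    (EuclideanSpace.basisFun m 𝕜).toBasis (EuclideanSpace.basisFun n 𝕜).toBasis]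

section Eigenbasis

variable {m n : Type*} [Fintype m] [Fintype n] [DecidableEq m] [DecidableEq n]
  (A : Matrix m n ℝ) (hA : (Aᴴ * A).IsHermitian)

theorem Matrix.inner_toEuclideanLin_eigenvectorBasis (x : EuclideanSpace ℝ n) (j : n) :
    ⟪toEuclideanLin A x, toEuclideanLin A (hA.eigenvectorBasis j)⟫ =
      hA.eigenvalues j * ⟪x, hA.eigenvectorBasis j⟫ := by
  have heig : toEuclideanLin Aᴴ (toEuclideanLin A (hA.eigenvectorBasis j)) =
      hA.eigenvalues j • hA.eigenvectorBasis j := by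
    ext1 i
    simpa [mulVec_mulVec] using congrFun (hA.mulVec_eigenvectorBasis j) i
  rw [← LinearMap.adjoint_inner_right, ← toEuclideanLin_conjTranspose_eq_adjoint, heig,
    real_inner_smul_right]

theorem Matrix.pairwise_inner_toEuclideanLin_eigenvectorBasis :
    Pairwise fun i j => ⟪toEuclideanLin A (hA.eigenvectorBasis i),
      toEuclideanLin A (hA.eigenvectorBasis j)⟫ = 0 := fun i j hij => by
  simp only [inner_toEuclideanLin_eigenvectorBasis, hA.eigenvectorBasis.orthonormal.2 hij, mul_zero]

theorem Matrix.sq_norm_toEuclideanLin_eigenvectorBasis (i : n) :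
    ‖toEuclideanLin A (hA.eigenvectorBasis i)‖ ^ 2 = hA.eigenvalues i := by
  rw [← real_inner_self_eq_norm_sq, inner_toEuclideanLin_eigenvectorBasis,
    real_inner_self_eq_norm_sq, hA.eigenvectorBasis.orthonormal.1 i, one_pow, mul_one]

open Classical in
theorem Matrix.rank_eq_card_toEuclideanLin_eigenvectorBasis_ne_zero :
    A.rank = #{i | toEuclideanLin A (hA.eigenvectorBasis i) ≠ 0} := by
  rw [← rank_conjTranspose_mul_self, hA.rank_eq_card_non_zero_eigs, Fintype.card_subtype]
  congr! 2 with i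
  rw [← sq_norm_toEuclideanLin_eigenvectorBasis, ne_eq, pow_eq_zero_iff two_ne_zero, norm_eq_zero]

end Eigenbasis

theorem nuclearNorm_eq_sum_norm_toEuclideanLin_eigenvectorBasis {m n : ℕ}
    (A : Matrix (Fin m) (Fin n) ℝ) (hA : (Aᴴ * A).IsHermitian) :
    nuclearNorm A = ∑ i, ‖toEuclideanLin A (hA.eigenvectorBasis i)‖ := by
  rw [nuclearNorm, trace_mul_cycle, Unitary.coe_star_mul_self, one_mul, trace_diagonal]
  refine Finset.sum_congr rfl fun i _ => ?_
  simp only [Function.comp_apply, RCLike.ofReal_real_eq_id, id]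
  rw [← sq_norm_toEuclideanLin_eigenvectorBasis A hA, Real.sqrt_sq (norm_nonneg _)]

theorem nuclearNorm_le_rank {m n : ℕ} {A : Matrix (Fin m) (Fin n) ℝ}
    (hA : matSpectralNorm A ≤ 1) : nuclearNorm A ≤ A.rank := by
  set hH := (posSemidef_conjTranspose_mul_self A).1
  have hle (i : Fin n) : ‖toEuclideanLin A (hH.eigenvectorBasis i)‖ ≤ 1 :=
    ((toEuclideanLin A).toContinuousLinearMap.unit_le_opNorm _
      (hH.eigenvectorBasis.orthonormal.1 i).le).trans hA
  rw [nuclearNorm_eq_sum_norm_toEuclideanLin_eigenvectorBasis A hH,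
    rank_eq_card_toEuclideanLin_eigenvectorBasis_ne_zero A hH]
  simpa only [ne_eq, norm_eq_zero] using sum_le_card_filter_ne_zero univ fun i _ => hle i

theorem ConvexOn.le_nuclearNorm {m n : ℕ} {g : Matrix (Fin m) (Fin n) ℝ → ℝ}
    (hg : ConvexOn ℝ {A | matSpectralNorm A ≤ 1} g)
    (hg_rank : ∀ A, matSpectralNorm A ≤ 1 → g A ≤ A.rank) {A : Matrix (Fin m) (Fin n) ℝ}
    (hA : matSpectralNorm A ≤ 1) : g A ≤ nuclearNorm A := by
  set hH := (posSemidef_conjTranspose_mul_self A).1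
  set e : Matrix (Fin m) (Fin n) ℝ ≃ₗ[ℝ] _ := toEuclideanLin.trans LinearMap.toContinuousLinearMap
  have he (T) : matSpectralNorm (e.symm T) = ‖T‖ := by
    simp only [matSpectralNorm, e, LinearEquiv.trans_symm, LinearEquiv.trans_apply,
      LinearMap.coe_toContinuousLinearMap_symm, LinearEquiv.apply_symm_apply]
    rfl
  have hG : ConvexOn ℝ (Metric.closedBall 0 1) (g ∘ e.symm) := by
    refine (hg.comp_linearMap e.symm.toLinearMap).subset (fun T hT => ?_) (convex_closedBall 0 1)
    simpa [he] using hT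
  have hG_rank (T : EuclideanSpace ℝ (Fin n) →L[ℝ] EuclideanSpace ℝ (Fin m)) (hT : ‖T‖ ≤ 1) :
      (g ∘ e.symm) T ≤ finrank ℝ (LinearMap.range T.toLinearMap) := by
    have hT' : toEuclideanLin (e.symm T) = T := by simp [e]
    have := hg_rank (e.symm T) ((he T).trans_le hT)
    rwa [rank_eq_finrank_range_toEuclideanLin, hT'] at this
  calc g A = (g ∘ e.symm) (e A) := by simp
    _ ≤ ∑ i, ‖e A (hH.eigenvectorBasis i)‖ :=
      hG.le_sum_norm_apply_of_le_finrank_range hG_rank hH.eigenvectorBasis hA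
        (pairwise_inner_toEuclideanLin_eigenvectorBasis A hH)
    _ = nuclearNorm A := (nuclearNorm_eq_sum_norm_toEuclideanLin_eigenvectorBasis A hH).symm

/-- The nuclear norm is the tightest convex envelope of the rank on the spectral-norm
unit ball: (a) `‖A‖_* ≤ rank A` on the ball, and (b) any convex minorant of the rank
on the ball is bounded above by the nuclear norm there. -/
theorem nuclearNorm_convex_envelope_of_rank {m n : ℕ} :
    (∀ A : Matrix (Fin m) (Fin n) ℝ, matSpectralNorm A ≤ 1 →
      nuclearNorm A ≤ (A.rank : ℝ)) ∧
    (∀ g : Matrix (Fin m) (Fin n) ℝ → ℝ,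
      ConvexOn ℝ {A : Matrix (Fin m) (Fin n) ℝ | matSpectralNorm A ≤ 1} g →
      (∀ A : Matrix (Fin m) (Fin n) ℝ, matSpectralNorm A ≤ 1 → g A ≤ (A.rank : ℝ)) →
      ∀ A : Matrix (Fin m) (Fin n) ℝ, matSpectralNorm A ≤ 1 → g A ≤ nuclearNorm A) :=
  ⟨fun _ hA => nuclearNorm_le_rank hA, fun _ hg hg_rank _ hA => hg.le_nuclearNorm hg_rank hA⟩
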